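/- (Sliced score-matching objective equivalence, Eq. (7) of the paper, without randomized response.) Let p : ℝⁿ → ℝ be a continuously differentiable probability density with p(x) > 0 for all x, let s : ℝⁿ → ℝⁿ be continuously differentiable with compact support, and let v ∈ ℝⁿ; assume all integrands below are integrable with respect to the measure p(x) dx. Then ∫_{ℝⁿ} p(x) · (1/2) (⟨v, ∇ log p(x)⟩ − ⟨v, s(x)⟩)² dx = ∫_{ℝⁿ} p(x) · ( ⟨v, (Ds(x)) v⟩ + (1/2) ⟨v, s(x)⟩² ) dx + C, where C = ∫_{ℝⁿ} p(x) · (1/2) ⟨v, ∇ log p(x)⟩² dx is a constant that does not depend on the model score s. Hence minimizing the projected Fisher divergence over s is equivalent to minimizing the objective ∫ p(x)(⟨v,(Ds(x))v⟩ + ½⟨v,s(x)⟩²) dx, which does not involve the unknown data score. -/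

import Mathlib

/-!
Write `a = ⟪v, ∇ log p⟫` and `b = ⟪v, s⟫`. Expanding the square, the left side is
`C - ∫ p a b + ∫ p b²/2`. Since `p a = ⟪v, ∇p⟫`, the cross term is `∫ (∂ᵥ p) b`, and integrating
by parts in the direction `v` (no boundary term, as `s` has compact support) turns it into
`-∫ p ∂ᵥ b = -∫ p ⟪v, Ds v⟫`.
-/

open scoped RealInnerProductSpace
open MeasureTheory

theorem Continuous.integrable_mul_of_hasCompactSupport {X : Type*} [TopologicalSpace X]
    [MeasurableSpace X] [OpensMeasurableSpace X] {μ : Measure X} [IsFiniteMeasureOnCompacts μ]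
    {f g : X → ℝ} (hf : Continuous f) (hg : Continuous g) (hgc : HasCompactSupport g) :
    Integrable (fun x => f x * g x) μ :=
  (hf.mul hg).integrable_of_hasCompactSupport hgc.mul_left

variable {E : Type*} [NormedAddCommGroup E] [InnerProductSpace ℝ E]

theorem mul_inner_gradient_log [CompleteSpace E] {p : E → ℝ} {x : E}
    (hp : DifferentiableAt ℝ p x) (hpx : p x ≠ 0) (v : E) :
    p x * ⟪v, gradient (fun y => Real.log (p y)) x⟫ = fderiv ℝ p x v := by
  rw [gradient, fderiv.log hp hpx, real_inner_comm, InnerProductSpace.toDual_symm_apply,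
    smul_apply, smul_eq_mul, mul_inv_cancel_left₀ hpx]

theorem fderiv_inner_const_left_apply {s : E → E} {x : E} (hs : DifferentiableAt ℝ s x)
    (v w : E) : fderiv ℝ (fun y => ⟪v, s y⟫) x w = ⟪v, fderiv ℝ s x w⟫ := by
  simp [fderiv_inner_apply ℝ (differentiableAt_const v) hs]

variable [MeasurableSpace E] {μ : Measure E}

theorem integral_mul_fderiv_eq_neg_fderiv_mul_of_hasCompactSupport [FiniteDimensional ℝ E]
    [BorelSpace E] [μ.IsAddHaarMeasure] {f g : E → ℝ}
    (hf : ContDiff ℝ 1 f) (hg : ContDiff ℝ 1 g) (hgc : HasCompactSupport g) (v : E) :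
    ∫ x, f x * fderiv ℝ g x v ∂μ = -∫ x, fderiv ℝ f x v * g x ∂μ := by
  have hf' : Continuous fun x => fderiv ℝ f x v :=
    (hf.continuous_fderiv one_ne_zero).clm_apply continuous_const
  have hg' : Continuous fun x => fderiv ℝ g x v :=
    (hg.continuous_fderiv one_ne_zero).clm_apply continuous_const
  have hg'c : HasCompactSupport fun x => fderiv ℝ g x v :=
    (hgc.fderiv ℝ).comp_left (g := fun L : E →L[ℝ] ℝ => L v) rfl
  exact integral_mul_fderiv_eq_neg_fderiv_mul_of_integrable
    (hf'.integrable_mul_of_hasCompactSupport hg.continuous hgc)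
    (hf.continuous.integrable_mul_of_hasCompactSupport hg' hg'c)
    (hf.continuous.integrable_mul_of_hasCompactSupport hg.continuous hgc)
    (fun x _ => hf.differentiable one_ne_zero x) (fun x _ => hg.differentiable one_ne_zero x)

variable {p : E → ℝ} {s : E → E}

theorem integrable_mul_inner_gradient_log_mul_inner [CompleteSpace E] [OpensMeasurableSpace E]
    [IsFiniteMeasureOnCompacts μ] (hp : ContDiff ℝ 1 p) (hppos : ∀ x, 0 < p x)
    (hs : Continuous s) (hsc : HasCompactSupport s) (v : E) :
    Integrable (fun x => p x * ⟪v, gradient (fun y => Real.log (p y)) x⟫ * ⟪v, s x⟫) μ := by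
  simp_rw [mul_inner_gradient_log (hp.differentiable one_ne_zero _) (hppos _).ne']
  exact ((hp.continuous_fderiv one_ne_zero).clm_apply continuous_const)
    |>.integrable_mul_of_hasCompactSupport (continuous_const.inner hs)
      (hsc.comp_left (inner_zero_right v))

theorem integral_mul_inner_fderiv_eq_neg_integral_mul_inner_gradient_log [FiniteDimensional ℝ E]
    [BorelSpace E] [μ.IsAddHaarMeasure] (hp : ContDiff ℝ 1 p) (hppos : ∀ x, 0 < p x)
    (hs : ContDiff ℝ 1 s) (hsc : HasCompactSupport s) (v : E) :
    ∫ x, p x * ⟪v, fderiv ℝ s x v⟫ ∂μ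
      = -∫ x, p x * ⟪v, gradient (fun y => Real.log (p y)) x⟫ * ⟪v, s x⟫ ∂μ := by
  have hibp := integral_mul_fderiv_eq_neg_fderiv_mul_of_hasCompactSupport (μ := μ) hp
    (contDiff_const.inner ℝ hs) (hsc.comp_left (inner_zero_right v)) v
  simp_rw [fderiv_inner_const_left_apply (hs.differentiable one_ne_zero _)] at hibp
  simp_rw [mul_inner_gradient_log (hp.differentiable one_ne_zero _) (hppos _).ne']
  exact hibp

theorem sliced_score_matching_objective_equiv_general
    (n : ℕ)
    (p : EuclideanSpace ℝ (Fin n) → ℝ)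
    (s : EuclideanSpace ℝ (Fin n) → EuclideanSpace ℝ (Fin n))
    (hp : ContDiff ℝ 1 p) (hppos : ∀ x, 0 < p x)
    (hs : ContDiff ℝ 1 s) (hssupp : HasCompactSupport s)
    (v : EuclideanSpace ℝ (Fin n))
    (hint3 : MeasureTheory.Integrable
      (fun x => p x * ((1 : ℝ)/2 *
        ⟪v, gradient (fun y => Real.log (p y)) x⟫^2))) :
    ∫ x, p x * ((1 : ℝ)/2 *
        (⟪v, gradient (fun y => Real.log (p y)) x⟫ - ⟪v, s x⟫)^2)
      = (∫ x, p x * (⟪v, (fderiv ℝ s x) v⟫ + (1 : ℝ)/2 * ⟪v, s x⟫^2))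
        + ∫ x, p x * ((1 : ℝ)/2 *
            ⟪v, gradient (fun y => Real.log (p y)) x⟫^2) := by
  set a := fun x => ⟪v, gradient (fun y => Real.log (p y)) x⟫
  set b := fun x => ⟪v, s x⟫
  have ha2 : Integrable fun x => p x * ((1 : ℝ)/2 * a x ^ 2) := hint3
  have hab : Integrable fun x => p x * a x * b x :=
    integrable_mul_inner_gradient_log_mul_inner hp hppos hs.continuous hssupp v
  have hb2 : Integrable fun x => p x * ((1 : ℝ)/2 * b x ^ 2) :=
    hp.continuous.integrable_mul_of_hasCompactSupport (by fun_prop)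
      ((hssupp.comp_left (inner_zero_right v)).comp_left
        (g := fun t : ℝ => (1 : ℝ)/2 * t ^ 2) (by norm_num))
  have hd : Integrable fun x => p x * ⟪v, fderiv ℝ s x v⟫ :=
    hp.continuous.integrable_mul_of_hasCompactSupport
      (continuous_const.inner ((hs.continuous_fderiv one_ne_zero).clm_apply continuous_const))
      ((hssupp.fderiv ℝ).comp_left (g := fun L : _ →L[ℝ] _ => ⟪v, L v⟫) (by simp))
  calc ∫ x, p x * ((1 : ℝ)/2 * (a x - b x)^2)
      = ∫ x, p x * ((1 : ℝ)/2 * a x ^ 2) - p x * a x * b x + p x * ((1 : ℝ)/2 * b x ^ 2) := by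
        congr 1 with x; ring
    _ = (-∫ x, p x * a x * b x) + (∫ x, p x * ((1 : ℝ)/2 * b x ^ 2))
          + ∫ x, p x * ((1 : ℝ)/2 * a x ^ 2) := by
        rw [integral_add (f := fun x => p x * ((1 : ℝ)/2 * a x ^ 2) - p x * a x * b x)
          (ha2.sub hab) hb2, integral_sub ha2 hab]
        ring
    _ = _ := by
        rw [← integral_mul_inner_fderiv_eq_neg_integral_mul_inner_gradient_log hp hppos hs
          hssupp v, ← integral_add hd hb2]
        simp only [mul_add, a, b]

/-- Sliced score-matching objective equivalence (Eq. (7) of the paper, without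
randomized response): for a positive `C¹` probability density `p`, a compactly
supported `C¹` model score `s` and a projection direction `v`,
`∫ p(x) ½(⟪v,∇log p(x)⟫ − ⟪v,s(x)⟫)² dx
  = ∫ p(x) (⟪v,(Ds(x))v⟫ + ½⟪v,s(x)⟫²) dx + C`,
where `C = ∫ p(x) ½⟪v,∇log p(x)⟫² dx` does not depend on `s`. -/
theorem sliced_score_matching_objective_equiv
    (n : ℕ)
    (p : EuclideanSpace ℝ (Fin n) → ℝ)
    (s : EuclideanSpace ℝ (Fin n) → EuclideanSpace ℝ (Fin n))
    (hp : ContDiff ℝ 1 p) (hppos : ∀ x, 0 < p x)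
    (hpdens : ∫ x, p x = 1)
    (hs : ContDiff ℝ 1 s) (hssupp : HasCompactSupport s)
    (v : EuclideanSpace ℝ (Fin n))
    (hint1 : MeasureTheory.Integrable
      (fun x => p x * ((1 : ℝ)/2 *
        (⟪v, gradient (fun y => Real.log (p y)) x⟫ - ⟪v, s x⟫)^2)))
    (hint2 : MeasureTheory.Integrable
      (fun x => p x * (⟪v, (fderiv ℝ s x) v⟫ + (1 : ℝ)/2 * ⟪v, s x⟫^2)))
    (hint3 : MeasureTheory.Integrable
      (fun x => p x * ((1 : ℝ)/2 *
        ⟪v, gradient (fun y => Real.log (p y)) x⟫^2))) :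
    ∫ x, p x * ((1 : ℝ)/2 *
        (⟪v, gradient (fun y => Real.log (p y)) x⟫ - ⟪v, s x⟫)^2)
      = (∫ x, p x * (⟪v, (fderiv ℝ s x) v⟫ + (1 : ℝ)/2 * ⟪v, s x⟫^2))
        + ∫ x, p x * ((1 : ℝ)/2 *
            ⟪v, gradient (fun y => Real.log (p y)) x⟫^2) :=
  sliced_score_matching_objective_equiv_general n p s hp hppos hs hssupp v hint3
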